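/- Let ϱ : [0,π] → ℝ be continuous with ϱ(ξ) > 0 for all ξ ∈ [0,π], and set ϱ₀ := min_{ξ∈[0,π]} ϱ(ξ) and ϱ₁ := (2/π)∫₀^π ϱ(ξ) dξ. Let n ≥ 0 be an integer, μ ∈ ℝ, and let φ : [0,π] → ℝ be twice continuously differentiable, not identically zero, satisfying φ''(ξ) + (μ − ϱ(ξ))φ(ξ) = 0 on [0,π] with the Dirichlet–Neumann boundary conditions φ(0) = 0 and φ'(π) = 0, and suppose φ has exactly n zeros in the open interval (0,π). Then (n + 1/2)² + ϱ₀ ≤ μ ≤ (n + 1/2)² + ϱ₁. -/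

import Mathlib

/-!
Prüfer transformation. For `s > 0` write `s φ = r sin θ`, `φ' = r cos θ`. Along a solution of
`φ'' + q φ = 0` the angle satisfies `θ' = s (q φ² + φ'²) / (s² φ² + φ'²)`; it increases by exactly
`π` between consecutive zeros of `φ` and by `π / 2` from the last zero to a point where `φ' = 0`,
so with `n` interior zeros the total increase over `[0, π]` is `(n + 1/2) π`. Zeros are simple by
uniqueness for the ODE, which keeps `θ'` continuous. If `q ≤ s²` then `θ' ≤ s` and `q ≤ s θ'`.
With `q = μ - ϱ` and `s² = μ - ϱ₀`, the first bound gives `(n + 1/2)² ≤ μ - ϱ₀`; integrating the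
second and using AM-GM gives `μ ≤ (n + 1/2)² + ϱ₁ - ϱ₀`.
-/

open Set Real Filter Topology MeasureTheory

section

variable {q φ : ℝ → ℝ} {s a b t : ℝ}

theorem tendsto_sub_inv_nhdsGT (a : ℝ) : Tendsto (fun t => (t - a)⁻¹) (𝓝[>] a) atTop := by
  refine tendsto_inv_nhdsGT_zero.comp
    (tendsto_nhdsWithin_of_tendsto_nhds_of_eventually_within _ ?_ ?_)
  · simpa using ((continuous_sub_right a).tendsto a).mono_left nhdsWithin_le_nhds
  · filter_upwards [self_mem_nhdsWithin] with t (ht : a < t) using sub_pos.mpr ht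

theorem tendsto_sub_inv_nhdsLT (a : ℝ) : Tendsto (fun t => (t - a)⁻¹) (𝓝[<] a) atBot := by
  refine tendsto_inv_nhdsLT_zero.comp
    (tendsto_nhdsWithin_of_tendsto_nhds_of_eventually_within _ ?_ ?_)
  · simpa using ((continuous_sub_right a).tendsto a).mono_left nhdsWithin_le_nhds
  · filter_upwards [self_mem_nhdsWithin] with t (ht : t < a) using sub_neg.mpr ht

theorem deriv_div_eq_deriv_div_slope_mul (ht : t ≠ a) (ha : φ a = 0) :
    deriv φ t / φ t = deriv φ t / slope φ a t * (t - a)⁻¹ := by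
  have hta : t - a ≠ 0 := sub_ne_zero.mpr ht
  rw [slope_def_field, ha, sub_zero, div_div_eq_mul_div]
  by_cases h : φ t = 0
  · simp [h]
  · field_simp

theorem tendsto_deriv_div_slope (hφ : DifferentiableAt ℝ φ a) (hφ' : ContinuousAt (deriv φ) a)
    (ha' : deriv φ a ≠ 0) : Tendsto (fun t => deriv φ t / slope φ a t) (𝓝[≠] a) (𝓝 1) := by
  rw [← div_self ha']
  exact (hφ'.tendsto.mono_left nhdsWithin_le_nhds).div hφ.hasDerivAt.tendsto_slope ha'

theorem tendsto_deriv_div_self_nhdsGT (hφ : DifferentiableAt ℝ φ a)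
    (hφ' : ContinuousAt (deriv φ) a) (ha : φ a = 0) (ha' : deriv φ a ≠ 0) :
    Tendsto (fun t => deriv φ t / φ t) (𝓝[>] a) atTop := by
  refine (Tendsto.pos_mul_atTop one_pos ((tendsto_deriv_div_slope hφ hφ' ha').mono_left
    (nhdsWithin_mono _ fun t (ht : a < t) => ht.ne')) (tendsto_sub_inv_nhdsGT a)).congr' ?_
  filter_upwards [self_mem_nhdsWithin] with t (ht : a < t)
  exact (deriv_div_eq_deriv_div_slope_mul ht.ne' ha).symm

theorem tendsto_deriv_div_self_nhdsLT (hφ : DifferentiableAt ℝ φ a)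
    (hφ' : ContinuousAt (deriv φ) a) (ha : φ a = 0) (ha' : deriv φ a ≠ 0) :
    Tendsto (fun t => deriv φ t / φ t) (𝓝[<] a) atBot := by
  refine (Tendsto.pos_mul_atBot one_pos ((tendsto_deriv_div_slope hφ hφ' ha').mono_left
    (nhdsWithin_mono _ fun t (ht : t < a) => ht.ne)) (tendsto_sub_inv_nhdsLT a)).congr' ?_
  filter_upwards [self_mem_nhdsWithin] with t (ht : t < a)
  exact (deriv_div_eq_deriv_div_slope_mul ht.ne ha).symm

theorem eqOn_zero_of_eq_zero_of_deriv_eq_zero (hq : ContinuousOn q (Icc a b))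
    (hφ : Differentiable ℝ φ) (hφ' : Differentiable ℝ (deriv φ))
    (hode : ∀ t ∈ Icc a b, deriv (deriv φ) t + q t * φ t = 0) {c : ℝ} (hc : c ∈ Icc a b)
    (h0 : φ c = 0) (h1 : deriv φ c = 0) : EqOn φ 0 (Icc a b) := by
  obtain ⟨C, hC⟩ := isCompact_Icc.exists_bound_of_continuousOn hq
  set v : ℝ → ℝ × ℝ → ℝ × ℝ := fun t x => (x.2, -q t * x.1)
  have hv : ∀ t ∈ Icc a b, LipschitzOnWith (max 1 C.toNNReal) (v t) univ := fun t ht =>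
    (LipschitzWith.prod_snd.prodMk ((lipschitzWith_smul (-q t)).comp
      LipschitzWith.prod_fst)).weaken (max_le_max le_rfl (by
        simpa [Real.le_toNNReal_iff_coe_le ((norm_nonneg _).trans (hC t ht))] using hC t ht))
      |>.lipschitzOnWith
  set F : ℝ → ℝ × ℝ := fun t => (φ t, deriv φ t)
  have hF : ∀ t ∈ Icc a b, HasDerivAt F (v t (F t)) t := fun t ht => by
    have := (hφ t).hasDerivAt.prodMk (hφ' t).hasDerivAt
    rwa [eq_neg_of_add_eq_zero_left (hode t ht), ← neg_mul] at this
  have hzero : ∀ t, HasDerivAt (fun _ => (0 : ℝ × ℝ)) (v t 0) t := fun t =>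
    (hasDerivAt_const t (0 : ℝ × ℝ)).congr_deriv (by ext <;> simp [v])
  have hFcont : ContinuousOn F (Icc a b) := fun t ht => (hF t ht).continuousAt.continuousWithinAt
  have hFc : F c = 0 := by simp [F, h0, h1]
  have hleft : EqOn F 0 (Icc a c) := by
    have hsub : Icc a c ⊆ Icc a b := Icc_subset_Icc_right hc.2
    exact ODE_solution_unique_of_mem_Icc_left (s := fun _ => univ)
      (fun t ht => hv t (hsub (Ioc_subset_Icc_self ht))) (hFcont.mono hsub)
      (fun t ht => (hF t (hsub (Ioc_subset_Icc_self ht))).hasDerivWithinAt) (fun _ _ => trivial)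
      continuousOn_const (fun t _ => (hzero t).hasDerivWithinAt) (fun _ _ => trivial) hFc
  have hright : EqOn F 0 (Icc c b) := by
    have hsub : Icc c b ⊆ Icc a b := Icc_subset_Icc_left hc.1
    exact ODE_solution_unique_of_mem_Icc_right (s := fun _ => univ)
      (fun t ht => hv t (hsub (Ico_subset_Icc_self ht))) (hFcont.mono hsub)
      (fun t ht => (hF t (hsub (Ico_subset_Icc_self ht))).hasDerivWithinAt) (fun _ _ => trivial)
      continuousOn_const (fun t _ => (hzero t).hasDerivWithinAt) (fun _ _ => trivial) hFc
  intro t ht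
  rcases le_total t c with htc | hct
  · exact congrArg Prod.fst (hleft ⟨ht.1, htc⟩)
  · exact congrArg Prod.fst (hright ⟨hct, ht.2⟩)

theorem sq_mul_sq_add_sq_pos {c x y : ℝ} (hc : c ≠ 0) (h : x = 0 → y ≠ 0) :
    0 < c ^ 2 * x ^ 2 + y ^ 2 := by
  by_cases hx : x = 0
  · simpa [hx] using pow_pos (abs_pos.mpr (h hx)) 2
  · positivity

/-- The Prüfer angle `θ ∈ (0, π)` with `cot θ = φ' / (s φ)`. It is meaningful only where
`φ ≠ 0`; at a zero of `φ` the junk value `x / 0 = 0` makes it `π / 2`. -/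
noncomputable def pruferAngle (s : ℝ) (φ : ℝ → ℝ) (t : ℝ) : ℝ :=
  π / 2 - arctan (deriv φ t / (s * φ t))

noncomputable def pruferRate (q : ℝ → ℝ) (s : ℝ) (φ : ℝ → ℝ) (t : ℝ) : ℝ :=
  s * (q t * φ t ^ 2 + deriv φ t ^ 2) / (s ^ 2 * φ t ^ 2 + deriv φ t ^ 2)

theorem hasDerivAt_pruferAngle (hs : s ≠ 0) (hφ : DifferentiableAt ℝ φ t)
    (hφ' : DifferentiableAt ℝ (deriv φ) t) (hode : deriv (deriv φ) t + q t * φ t = 0)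
    (ht : φ t ≠ 0) : HasDerivAt (pruferAngle s φ) (pruferRate q s φ t) t := by
  have hu := hφ'.hasDerivAt.div (hφ.hasDerivAt.const_mul s) (mul_ne_zero hs ht)
  refine (((hasDerivAt_arctan _).comp t hu).const_sub (π / 2)).congr_deriv ?_
  unfold pruferRate
  rw [Pi.div_apply, eq_neg_of_add_eq_zero_left hode]
  field_simp
  ring

theorem tendsto_pruferAngle_nhdsGT (hs : 0 < s) (hφ : DifferentiableAt ℝ φ a)
    (hφ' : ContinuousAt (deriv φ) a) (ha : φ a = 0) (ha' : deriv φ a ≠ 0) :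
    Tendsto (pruferAngle s φ) (𝓝[>] a) (𝓝 0) := by
  have h := ((tendsto_arctan_atTop.mono_right nhdsWithin_le_nhds).comp
    ((tendsto_deriv_div_self_nhdsGT hφ hφ' ha ha').atTop_div_const hs)).const_sub (π / 2)
  rw [sub_self] at h
  refine h.congr fun t => ?_
  simp [pruferAngle, div_mul_eq_div_div_swap]

theorem tendsto_pruferAngle_nhdsLT (hs : 0 < s) (hφ : DifferentiableAt ℝ φ a)
    (hφ' : ContinuousAt (deriv φ) a) (ha : φ a = 0) (ha' : deriv φ a ≠ 0) :
    Tendsto (pruferAngle s φ) (𝓝[<] a) (𝓝 π) := by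
  have h := ((tendsto_arctan_atBot.mono_right nhdsWithin_le_nhds).comp
    ((tendsto_deriv_div_self_nhdsLT hφ hφ' ha ha').atBot_div_const hs)).const_sub (π / 2)
  rw [sub_neg_eq_add, add_halves] at h
  refine h.congr fun t => ?_
  simp [pruferAngle, div_mul_eq_div_div_swap]

theorem continuousOn_pruferRate (hs : s ≠ 0) (hq : ContinuousOn q (Icc a b))
    (hφ : Continuous φ) (hφ' : Continuous (deriv φ))
    (hsimple : ∀ t ∈ Icc a b, φ t = 0 → deriv φ t ≠ 0) :
    ContinuousOn (pruferRate q s φ) (Icc a b) :=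
  ContinuousOn.div (by fun_prop) (by fun_prop) fun t ht =>
    (sq_mul_sq_add_sq_pos hs (hsimple t ht)).ne'

theorem pruferRate_le (hs : 0 < s) (hqs : q t ≤ s ^ 2) (hsimple : φ t = 0 → deriv φ t ≠ 0) :
    pruferRate q s φ t ≤ s := by
  rw [pruferRate, div_le_iff₀ (sq_mul_sq_add_sq_pos hs.ne' hsimple)]
  nlinarith [mul_le_mul_of_nonneg_right hqs (sq_nonneg (φ t))]

theorem le_mul_pruferRate (hs : s ≠ 0) (hqs : q t ≤ s ^ 2) (hsimple : φ t = 0 → deriv φ t ≠ 0) :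
    q t ≤ s * pruferRate q s φ t := by
  rw [pruferRate, mul_div_assoc', le_div_iff₀ (sq_mul_sq_add_sq_pos hs hsimple)]
  nlinarith [mul_le_mul_of_nonneg_right hqs (sq_nonneg (deriv φ t))]

theorem integral_pruferRate_eq_sub (hq : ContinuousOn q (Icc a b))
    (hφ : Differentiable ℝ φ) (hφ' : Differentiable ℝ (deriv φ))
    (hode : ∀ t ∈ Icc a b, deriv (deriv φ) t + q t * φ t = 0)
    (hsimple : ∀ t ∈ Icc a b, φ t = 0 → deriv φ t ≠ 0)
    (hab : a < b) (hs : s ≠ 0) (hnz : ∀ t ∈ Ioo a b, φ t ≠ 0)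
    {θa θb : ℝ} (ha : Tendsto (pruferAngle s φ) (𝓝[>] a) (𝓝 θa))
    (hb : Tendsto (pruferAngle s φ) (𝓝[<] b) (𝓝 θb)) :
    ∫ t in a..b, pruferRate q s φ t = θb - θa :=
  intervalIntegral.integral_eq_sub_of_hasDerivAt_of_tendsto hab
    (fun t ht => hasDerivAt_pruferAngle hs (hφ t) (hφ' t) (hode t (Ioo_subset_Icc_self ht))
      (hnz t ht))
    ((continuousOn_pruferRate hs hq hφ.continuous hφ'.continuous hsimple).intervalIntegrable_of_Icc
      hab.le) ha hb

theorem integral_pruferRate_eq_pi (hq : ContinuousOn q (Icc a b))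
    (hφ : Differentiable ℝ φ) (hφ' : Differentiable ℝ (deriv φ))
    (hode : ∀ t ∈ Icc a b, deriv (deriv φ) t + q t * φ t = 0)
    (hsimple : ∀ t ∈ Icc a b, φ t = 0 → deriv φ t ≠ 0)
    (hab : a < b) (hs : 0 < s) (hnz : ∀ t ∈ Ioo a b, φ t ≠ 0) (ha : φ a = 0) (hb : φ b = 0) :
    ∫ t in a..b, pruferRate q s φ t = π := by
  rw [integral_pruferRate_eq_sub hq hφ hφ' hode hsimple hab hs.ne' hnz
    (tendsto_pruferAngle_nhdsGT hs (hφ a) hφ'.continuous.continuousAt ha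
      (hsimple a (left_mem_Icc.mpr hab.le) ha))
    (tendsto_pruferAngle_nhdsLT hs (hφ b) hφ'.continuous.continuousAt hb
      (hsimple b (right_mem_Icc.mpr hab.le) hb)), sub_zero]

theorem integral_pruferRate_eq_pi_div_two (hq : ContinuousOn q (Icc a b))
    (hφ : Differentiable ℝ φ) (hφ' : Differentiable ℝ (deriv φ))
    (hode : ∀ t ∈ Icc a b, deriv (deriv φ) t + q t * φ t = 0)
    (hsimple : ∀ t ∈ Icc a b, φ t = 0 → deriv φ t ≠ 0)
    (hab : a < b) (hs : 0 < s) (hnz : ∀ t ∈ Ioo a b, φ t ≠ 0) (ha : φ a = 0)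
    (hb : deriv φ b = 0) :
    ∫ t in a..b, pruferRate q s φ t = π / 2 := by
  have hb_mem : b ∈ Icc a b := right_mem_Icc.mpr hab.le
  have hθb : pruferAngle s φ b = π / 2 := by simp [pruferAngle, hb]
  rw [integral_pruferRate_eq_sub hq hφ hφ' hode hsimple hab hs.ne' hnz
    (tendsto_pruferAngle_nhdsGT hs (hφ a) hφ'.continuous.continuousAt ha
      (hsimple a (left_mem_Icc.mpr hab.le) ha))
    ((hasDerivAt_pruferAngle hs.ne' (hφ b) (hφ' b) (hode b hb_mem)
      fun h => hsimple b hb_mem h hb).continuousAt.tendsto.mono_left nhdsWithin_le_nhds),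
    hθb, sub_zero]

theorem integral_pruferRate_eq_of_encard (hq : ContinuousOn q (Icc a b))
    (hφ : Differentiable ℝ φ) (hφ' : Differentiable ℝ (deriv φ))
    (hode : ∀ t ∈ Icc a b, deriv (deriv φ) t + q t * φ t = 0)
    (hsimple : ∀ t ∈ Icc a b, φ t = 0 → deriv φ t ≠ 0)
    (hab : a < b) (hs : 0 < s) (ha : φ a = 0) (hb : deriv φ b = 0) {n : ℕ}
    (hn : {t ∈ Ioo a b | φ t = 0}.encard = n) :
    ∫ t in a..b, pruferRate q s φ t = (n + 1 / 2) * π := by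
  induction n generalizing a with
  | zero =>
    have hZ : {t ∈ Ioo a b | φ t = 0} = ∅ := encard_eq_zero.mp (by exact_mod_cast hn)
    have hnz : ∀ t ∈ Ioo a b, φ t ≠ 0 := fun t ht h0 =>
      eq_empty_iff_forall_notMem.mp hZ t ⟨ht, h0⟩
    rw [integral_pruferRate_eq_pi_div_two hq hφ hφ' hode hsimple hab hs hnz ha hb]
    ring
  | succ n ih =>
    set Z := {t ∈ Ioo a b | φ t = 0}
    obtain ⟨x, hxZ, hmin⟩ := Z.exists_min_image id (finite_of_encard_eq_coe hn)
      (nonempty_of_encard_ne_zero (by simp [hn]))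
    have hnz : ∀ t ∈ Ioo a x, φ t ≠ 0 := fun t ht h0 =>
      (hmin t ⟨⟨ht.1, ht.2.trans hxZ.1.2⟩, h0⟩).not_gt ht.2
    have hZx : {t ∈ Ioo x b | φ t = 0} = Z \ {x} := by
      ext t
      simp only [Z, Set.mem_sdiff, mem_Ioo, mem_singleton_iff]
      constructor
      · rintro ⟨⟨hxt, htb⟩, h0⟩
        exact ⟨⟨⟨hxZ.1.1.trans hxt, htb⟩, h0⟩, hxt.ne'⟩
      · rintro ⟨⟨⟨hat, htb⟩, h0⟩, htx⟩
        exact ⟨⟨(hmin t ⟨⟨hat, htb⟩, h0⟩).lt_of_ne' htx, htb⟩, h0⟩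
    have hnx : {t ∈ Ioo x b | φ t = 0}.encard = n := by
      rw [hZx, encard_sdiff_singleton_of_mem hxZ, hn]
      norm_cast
    have hax : Icc a x ⊆ Icc a b := Icc_subset_Icc_right hxZ.1.2.le
    have hxb : Icc x b ⊆ Icc a b := Icc_subset_Icc_left hxZ.1.1.le
    have hcont := continuousOn_pruferRate hs.ne' hq hφ.continuous hφ'.continuous hsimple
    rw [← intervalIntegral.integral_add_adjacent_intervals
      ((hcont.mono hax).intervalIntegrable_of_Icc hxZ.1.1.le)
      ((hcont.mono hxb).intervalIntegrable_of_Icc hxZ.1.2.le),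
      integral_pruferRate_eq_pi (hq.mono hax) hφ hφ' (fun t ht => hode t (hax ht))
        (fun t ht => hsimple t (hax ht)) hxZ.1.1 hs hnz ha hxZ.2,
      ih (hq.mono hxb) (fun t ht => hode t (hxb ht)) (fun t ht => hsimple t (hxb ht)) hxZ.1.2
        hxZ.2 hnx]
    push_cast
    ring

theorem add_half_mul_pi_le (hq : ContinuousOn q (Icc a b))
    (hφ : Differentiable ℝ φ) (hφ' : Differentiable ℝ (deriv φ))
    (hode : ∀ t ∈ Icc a b, deriv (deriv φ) t + q t * φ t = 0)
    (hsimple : ∀ t ∈ Icc a b, φ t = 0 → deriv φ t ≠ 0)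
    (hab : a < b) (hs : 0 < s) (hqs : ∀ t ∈ Icc a b, q t ≤ s ^ 2) (ha : φ a = 0)
    (hb : deriv φ b = 0) {n : ℕ} (hn : {t ∈ Ioo a b | φ t = 0}.encard = n) :
    (n + 1 / 2) * π ≤ s * (b - a) := by
  rw [← integral_pruferRate_eq_of_encard hq hφ hφ' hode hsimple hab hs ha hb hn]
  calc ∫ t in a..b, pruferRate q s φ t ≤ ∫ _ in a..b, s :=
        intervalIntegral.integral_mono_on hab.le
          ((continuousOn_pruferRate hs.ne' hq hφ.continuous hφ'.continuous
            hsimple).intervalIntegrable_of_Icc hab.le)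
          intervalIntegrable_const fun t ht => pruferRate_le hs (hqs t ht) (hsimple t ht)
    _ = s * (b - a) := by simp [mul_comm]

theorem integral_le_mul_add_half_mul_pi (hq : ContinuousOn q (Icc a b))
    (hφ : Differentiable ℝ φ) (hφ' : Differentiable ℝ (deriv φ))
    (hode : ∀ t ∈ Icc a b, deriv (deriv φ) t + q t * φ t = 0)
    (hsimple : ∀ t ∈ Icc a b, φ t = 0 → deriv φ t ≠ 0)
    (hab : a < b) (hs : 0 < s) (hqs : ∀ t ∈ Icc a b, q t ≤ s ^ 2) (ha : φ a = 0)
    (hb : deriv φ b = 0) {n : ℕ} (hn : {t ∈ Ioo a b | φ t = 0}.encard = n) :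
    ∫ t in a..b, q t ≤ s * ((n + 1 / 2) * π) := by
  rw [← integral_pruferRate_eq_of_encard hq hφ hφ' hode hsimple hab hs ha hb hn,
    ← intervalIntegral.integral_const_mul]
  exact intervalIntegral.integral_mono_on hab.le (hq.intervalIntegrable_of_Icc hab.le)
    (((continuousOn_pruferRate hs.ne' hq hφ.continuous hφ'.continuous
      hsimple).intervalIntegrable_of_Icc hab.le).const_mul s)
    fun t ht => le_mul_pruferRate hs.ne' (hqs t ht) (hsimple t ht)

end

/-- Two-sided eigenvalue bound (6.37) for the Dirichlet–Neumann Sturm–Liouville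
problem: if `φ'' + (μ − ϱ)φ = 0`, `φ(0) = 0`, `φ'(π) = 0`, and `φ` has exactly
`n` zeros in `(0,π)`, then `(n + 1/2)² + ϱ₀ ≤ μ ≤ (n + 1/2)² + ϱ₁`. -/
theorem stmt_4
    (ϱ : ℝ → ℝ) (hϱ : ContinuousOn ϱ (Set.Icc 0 Real.pi))
    (hϱpos : ∀ ξ ∈ Set.Icc 0 Real.pi, 0 < ϱ ξ)
    (ϱ₀ ϱ₁ : ℝ) (hϱ₀ : IsLeast (ϱ '' Set.Icc 0 Real.pi) ϱ₀)
    (hϱ₁ : ϱ₁ = (2 / Real.pi) * ∫ ξ in (0:ℝ)..Real.pi, ϱ ξ)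
    (n : ℕ) (μ : ℝ) (φ : ℝ → ℝ) (hφ : ContDiff ℝ 2 φ)
    (hne : ∃ ξ ∈ Set.Icc 0 Real.pi, φ ξ ≠ 0)
    (hode : ∀ ξ ∈ Set.Icc 0 Real.pi, deriv (deriv φ) ξ + (μ - ϱ ξ) * φ ξ = 0)
    (hbc0 : φ 0 = 0) (hbcπ : deriv φ Real.pi = 0)
    (hzeros : {ξ ∈ Set.Ioo 0 Real.pi | φ ξ = 0}.encard = n) :
    ((n : ℝ) + 1 / 2) ^ 2 + ϱ₀ ≤ μ ∧ μ ≤ ((n : ℝ) + 1 / 2) ^ 2 + ϱ₁ := by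
  have hφ' : Differentiable ℝ (deriv φ) := hφ.differentiable_deriv_two
  replace hφ : Differentiable ℝ φ := hφ.differentiable (by norm_num)
  have hq : ContinuousOn (fun ξ => μ - ϱ ξ) (Icc 0 π) := continuousOn_const.sub hϱ
  have hsimple : ∀ ξ ∈ Icc 0 π, φ ξ = 0 → deriv φ ξ ≠ 0 := fun c hc h0 h1 => by
    obtain ⟨ξ, hξ, hφξ⟩ := hne
    exact hφξ (eqOn_zero_of_eq_zero_of_deriv_eq_zero hq hφ hφ' hode hc h0 h1 hξ)
  obtain ⟨⟨ξ₀, hξ₀, rfl⟩, hmin⟩ := hϱ₀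
  have hqs : ∀ s : ℝ, μ - ϱ ξ₀ ≤ s ^ 2 → ∀ ξ ∈ Icc 0 π, μ - ϱ ξ ≤ s ^ 2 :=
    fun s hsq ξ hξ => by linarith [hmin ⟨ξ, hξ, rfl⟩]
  have hlow : ∀ s > 0, μ - ϱ ξ₀ ≤ s ^ 2 → (n : ℝ) + 1 / 2 ≤ s := fun s hs hsq => by
    have h := add_half_mul_pi_le hq hφ hφ' hode hsimple pi_pos hs (hqs s hsq) hbc0 hbcπ hzeros
    rw [sub_zero] at h
    exact le_of_mul_le_mul_right h pi_pos
  have hM : 0 < μ - ϱ ξ₀ := by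
    by_contra! h
    linarith [hlow ((n + 1 / 2) / 2) (by positivity) (h.trans (sq_nonneg _))]
  set s := √(μ - ϱ ξ₀)
  have hs : 0 < s := sqrt_pos.mpr hM
  have hs2 : s ^ 2 = μ - ϱ ξ₀ := sq_sqrt hM.le
  have hn : (n : ℝ) + 1 / 2 ≤ s := hlow s hs hs2.ge
  refine ⟨by nlinarith, ?_⟩
  have hup := integral_le_mul_add_half_mul_pi hq hφ hφ' hode hsimple pi_pos hs (hqs s hs2.ge)
    hbc0 hbcπ hzeros
  rw [intervalIntegral.integral_sub intervalIntegrable_const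
    (hϱ.intervalIntegrable_of_Icc pi_pos.le), intervalIntegral.integral_const, sub_zero,
    smul_eq_mul] at hup
  have hamgm : s * ((n : ℝ) + 1 / 2) ≤ (μ - ϱ ξ₀ + ((n : ℝ) + 1 / 2) ^ 2) / 2 := by
    nlinarith [sq_nonneg (s - (n + 1 / 2))]
  rw [hϱ₁, div_mul_eq_mul_div, ← sub_le_iff_le_add', le_div_iff₀ pi_pos]
  nlinarith [mul_le_mul_of_nonneg_right hamgm pi_pos.le, mul_pos (hϱpos ξ₀ hξ₀) pi_pos]
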